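/- Let W ∈ ℝ^{m×m} be symmetric. Suppose U_ℓ = Q Σ Rᵀ with Q ∈ ℝ^{m×k}, Qᵀ W Q = I_k, R ∈ ℝ^{ℓ×k}, Rᵀ R = I_k, Σ ∈ ℝ^{k×k} diagonal. Let C ∈ ℝ^{m×s} with C = Q Qᵀ W C, and let Q̃ Σ̃ R̃ᵀ be a thin SVD of [Σ | Qᵀ W C] (Q̃ ∈ ℝ^{k×k} orthogonal, Σ̃ ∈ ℝ^{k×k} diagonal nonnegative, R̃ ∈ ℝ^{(k+s)×k} with R̃ᵀ R̃ = I_k). Set Q̂ = Q Q̃, Σ̂ = Σ̃, R̂ = [[R,0],[0,I_s]] R̃. Let u ∈ ℝ^m, e = u − Q Qᵀ W u, p = (eᵀ W e)^{1/2} > 0, ẽ = e/p, and let Q̄ Σ̄ R̄ᵀ be a full SVD of Ȳ = [[Σ̂, Q̂ᵀ W u],[0, p]] ∈ ℝ^{(k+1)×(k+1)} (Q̄, R̄ orthogonal, Σ̄ diagonal nonnegative). Then [U_ℓ | C | u] = ( [Q | ẽ] · [[Q̃,0],[0,1]] · Q̄ ) Σ̄ ( [[R̂,0],[0,1]] R̄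 )ᵀ, the left factor L = [Q | ẽ] [[Q̃,0],[0,1]] Q̄ satisfies Lᵀ W L = I_{k+1}, and the right factor N = [[R̂,0],[0,1]] R̄ satisfies Nᵀ N = I_{k+1}; i.e., this is a core SVD of [U_ℓ | C | u] with respect to W. -/

import Mathlib

/-!
Since `C = Q Qᵀ W C`, the columns of `C` lie in the range of `Q`, so
`[U | C] = Q [Σ | Qᵀ W C] diag(R, I)ᵀ = (Q Q̃) Σ̃ R̂ᵀ`. The residual `e` is `W`-orthogonal to the
range of `Q = Q̂ Q̃ᵀ`, hence `u = Q̂ (Q̂ᵀ W u) + p ẽ` and `[Q̂ | ẽ]` is `W`-orthonormal. This gives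
`[U | C | u] = [Q̂ | ẽ] Ȳ diag(R̂, 1)ᵀ`, and substituting the SVD of `Ȳ` yields the factorization;
orthonormality of the outer factors survives products with orthogonal matrices and
block-diagonal assembly.
-/

open Matrix

noncomputable section

/-- `[A | b]`: the matrix obtained by appending the column `b` to the matrix `A`. -/
def appendCol {m n : Type*} (A : Matrix m n ℝ) (b : m → ℝ) :
    Matrix m (n ⊕ Fin 1) ℝ :=
  Matrix.of fun i => Sum.elim (A i) fun _ => b i

/-- `[A | C]`: the matrix obtained by appending the columns of `C` after those of `A`. -/
def appendCols {m n n' : Type*} (A : Matrix m n ℝ) (C : Matrix m n' ℝ) :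
    Matrix m (n ⊕ n') ℝ :=
  Matrix.of fun i => Sum.elim (A i) (C i)

namespace Matrix

variable {α : Type*} [CommRing α]

theorem transpose_mul_mul_mul_eq_one {l m n : Type*} [Fintype l] [Fintype m] [DecidableEq m]
    [DecidableEq n] {W : Matrix l l α} {A : Matrix l m α} {B : Matrix m n α}
    (hA : Aᵀ * W * A = 1) (hB : Bᵀ * B = 1) : (A * B)ᵀ * W * (A * B) = 1 := by
  calc (A * B)ᵀ * W * (A * B) = Bᵀ * (Aᵀ * W * A) * B := by
        simp only [transpose_mul, Matrix.mul_assoc]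
    _ = 1 := by rw [hA, Matrix.mul_one, hB]

theorem transpose_mul_mul_self_eq_one {l m n : Type*} [Fintype l] [Fintype m] [DecidableEq m]
    [DecidableEq n] {A : Matrix l m α} {B : Matrix m n α} (hA : Aᵀ * A = 1) (hB : Bᵀ * B = 1) :
    (A * B)ᵀ * (A * B) = 1 := by
  calc (A * B)ᵀ * (A * B) = Bᵀ * (Aᵀ * A) * B := by
        simp only [transpose_mul, Matrix.mul_assoc]
    _ = 1 := by rw [hA, Matrix.mul_one, hB]

theorem fromBlocks_transpose_mul_self_eq_one {l l' m n : Type*} [Fintype l] [Fintype l']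
    [DecidableEq m] [DecidableEq n] {A : Matrix l m α} {D : Matrix l' n α} (hA : Aᵀ * A = 1)
    (hD : Dᵀ * D = 1) : (fromBlocks A 0 0 D)ᵀ * fromBlocks A 0 0 D = 1 := by
  simp [fromBlocks_transpose, fromBlocks_multiply, hA, hD]

theorem fromCols_transpose_mul_mul_fromCols_eq_one {l n₁ n₂ : Type*} [Fintype l]
    [DecidableEq n₁] [DecidableEq n₂] {W : Matrix l l α} (hW : W.IsSymm) {A : Matrix l n₁ α}
    {B : Matrix l n₂ α} (hA : Aᵀ * W * A = 1) (hAB : Aᵀ * W * B = 0) (hB : Bᵀ * W * B = 1) :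
    (fromCols A B)ᵀ * W * fromCols A B = 1 := by
  have hBA : Bᵀ * W * A = 0 := by
    rw [← transpose_transpose (Bᵀ * W * A)]
    simp only [transpose_mul, transpose_transpose, hW.eq, ← Matrix.mul_assoc, hAB,
      transpose_zero]
  rw [transpose_fromCols, fromRows_mul, fromRows_mul_fromCols, hA, hAB, hBA, hB, fromBlocks_one]

theorem transpose_mul_mul_replicateCol {l m ι : Type*} [Fintype l] (A : Matrix l m α)
    (W : Matrix l l α) (v : l → α) :
    Aᵀ * W * replicateCol ι v = replicateCol ι (Aᵀ *ᵥ (W *ᵥ v)) := by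
  rw [replicateCol_mulVec, replicateCol_mulVec, Matrix.mul_assoc]

theorem replicateCol_transpose_mul_mul_replicateCol_eq_one {l : Type*} [Fintype l]
    {W : Matrix l l α} {v : l → α} (hv : v ⬝ᵥ (W *ᵥ v) = 1) :
    (replicateCol (Fin 1) v)ᵀ * W * replicateCol (Fin 1) v = 1 := by
  rw [transpose_mul_mul_replicateCol, transpose_replicateCol, replicateRow_mulVec_eq_const, hv]
  ext i j
  obtain rfl := Subsingleton.elim i j
  simp

theorem transpose_mulVec_mulVec_sub_proj {l m : Type*} [Fintype l] [Fintype m] [DecidableEq m]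
    {W : Matrix l l α} {Q : Matrix l m α} (hQ : Qᵀ * W * Q = 1) (u : l → α) :
    Qᵀ *ᵥ (W *ᵥ (u - Q *ᵥ (Qᵀ *ᵥ (W *ᵥ u)))) = 0 := by
  simp only [mulVec_sub, mulVec_mulVec, ← Matrix.mul_assoc, hQ, Matrix.one_mul, sub_self]

theorem fromCols_eq_mul_transpose_of_eq_proj {l n₁ n₂ k k' k'' : Type*} [Fintype l]
    [Fintype k] [Fintype k'] [Fintype k''] [Fintype n₂] [DecidableEq n₂] {W : Matrix l l α}
    {U : Matrix l n₁ α} {Q : Matrix l k α} {S : Matrix k k' α} {R : Matrix n₁ k' α}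
    {C : Matrix l n₂ α} (hU : U = Q * S * Rᵀ) (hC : C = Q * Qᵀ * W * C)
    {Qt : Matrix k k'' α} {D : Matrix k'' k'' α} {Rt : Matrix (k' ⊕ n₂) k'' α}
    (hSVD : fromCols S (Qᵀ * W * C) = Qt * D * Rtᵀ) :
    fromCols U C = Q * Qt * D * ((fromBlocks R 0 0 1 : Matrix _ (k' ⊕ n₂) α) * Rt)ᵀ := by
  have hS : fromCols S (Qᵀ * W * C) * (fromBlocks R 0 0 1 : Matrix _ (k' ⊕ n₂) α)ᵀ =
      fromCols (S * Rᵀ) (Qᵀ * W * C) := by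
    rw [fromBlocks_transpose, fromCols_mul_fromBlocks]
    simp
  calc fromCols U C = Q * fromCols (S * Rᵀ) (Qᵀ * W * C) := by
        rw [mul_fromCols, ← Matrix.mul_assoc, ← hU, ← Matrix.mul_assoc, ← Matrix.mul_assoc, ← hC]
    _ = _ := by
        rw [← hS, hSVD, transpose_mul]
        simp only [Matrix.mul_assoc]

theorem fromCols_replicateCol_eq_mul_transpose {l n k k' : Type*} [Fintype k] [Fintype k']
    {X : Matrix l n α} {Q : Matrix l k α} {S : Matrix k k' α} {N : Matrix n k' α}
    (hX : X = Q * S * Nᵀ) {u v : l → α} {c : k → α} {p : α} (hv : Q *ᵥ c + p • v = u) :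
    fromCols X (replicateCol (Fin 1) u) =
      fromCols Q (replicateCol (Fin 1) v) *
        (fromBlocks S (replicateCol (Fin 1) c) 0 (of fun _ _ => p) :
          Matrix (k ⊕ Fin 1) (k' ⊕ Fin 1) α) *
        (fromBlocks N 0 0 1 : Matrix (n ⊕ Fin 1) (k' ⊕ Fin 1) α)ᵀ := by
  have hu : Q * replicateCol (Fin 1) c +
      replicateCol (Fin 1) v * (of fun _ _ => p : Matrix (Fin 1) (Fin 1) α) =
      replicateCol (Fin 1) u := by
    rw [← hv]
    ext i j
    simp [mul_apply, mulVec, dotProduct, mul_comm]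
  rw [fromCols_mul_fromBlocks, fromBlocks_transpose, fromCols_mul_fromBlocks]
  simp [hX, hu, Matrix.mul_assoc]

end Matrix

theorem dotProduct_mulVec_inv_smul_eq_one {l : Type*} [Fintype l] {W : Matrix l l ℝ}
    {e : l → ℝ} {p : ℝ} (hp : p = √(e ⬝ᵥ (W *ᵥ e))) (hp0 : 0 < p) :
    (p⁻¹ • e) ⬝ᵥ (W *ᵥ (p⁻¹ • e)) = 1 := by
  have hsq : e ⬝ᵥ (W *ᵥ e) = p ^ 2 := by
    rw [hp, Real.sq_sqrt (Real.sqrt_pos.mp (hp ▸ hp0)).le]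
  rw [mulVec_smul, smul_dotProduct, dotProduct_smul, hsq, smul_eq_mul, smul_eq_mul]
  field_simp

theorem appendCol_eq_fromCols {m n : Type*} (A : Matrix m n ℝ) (b : m → ℝ) :
    appendCol A b = fromCols A (replicateCol (Fin 1) b) :=
  rfl

theorem appendCols_eq_fromCols {m n n' : Type*} (A : Matrix m n ℝ) (C : Matrix m n' ℝ) :
    appendCols A C = fromCols A C :=
  rfl

theorem stmt11_general {m ℓ k s : ℕ}
    (W : Matrix (Fin m) (Fin m) ℝ) (hW : W.IsSymm)
    (U : Matrix (Fin m) (Fin ℓ) ℝ)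
    (Q : Matrix (Fin m) (Fin k) ℝ) (σ : Fin k → ℝ)
    (R : Matrix (Fin ℓ) (Fin k) ℝ)
    (hU : U = Q * diagonal σ * Rᵀ)
    (hQ : Qᵀ * W * Q = 1) (hR : Rᵀ * R = 1)
    (C : Matrix (Fin m) (Fin s) ℝ) (hC : C = Q * Qᵀ * W * C)
    -- thin SVD  [Σ | Qᵀ W C] = Qt Σt Rtᵀ
    (Qt : Matrix (Fin k) (Fin k) ℝ) (σt : Fin k → ℝ)
    (Rt : Matrix (Fin k ⊕ Fin s) (Fin k) ℝ)
    (hQt : Qtᵀ * Qt = 1) (hQt' : Qt * Qtᵀ = 1)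
    (hRt : Rtᵀ * Rt = 1)
    (hSVD : appendCols (diagonal σ) (Qᵀ * W * C) = Qt * diagonal σt * Rtᵀ)
    -- the new column u, its residual e, p = ‖e‖_W > 0, ẽ = e/p
    (u e : Fin m → ℝ) (he : e = u - Q *ᵥ (Qᵀ *ᵥ (W *ᵥ u)))
    (p : ℝ) (hp : p = Real.sqrt (e ⬝ᵥ (W *ᵥ e))) (hppos : 0 < p)
    (etil : Fin m → ℝ) (hetil : etil = p⁻¹ • e)
    -- full SVD  Ȳ = [[Σ̂, Q̂ᵀ W u],[0,p]] = Qb Σb Rbᵀ  with  Q̂ = Q Qt, Σ̂ = Σt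
    (Qb Rb : Matrix (Fin k ⊕ Fin 1) (Fin k ⊕ Fin 1) ℝ)
    (ν : Fin k ⊕ Fin 1 → ℝ)
    (hQb : Qbᵀ * Qb = 1)
    (hRb : Rbᵀ * Rb = 1)
    (hSVDb : fromBlocks (diagonal σt)
        (Matrix.of fun i (_ : Fin 1) => ((Q * Qt)ᵀ *ᵥ (W *ᵥ u)) i) 0
        (Matrix.of fun (_ : Fin 1) (_ : Fin 1) => p) = Qb * diagonal ν * Rbᵀ) :
    appendCol (appendCols U C) u =
      (appendCol Q etil *
          (fromBlocks Qt 0 0 1 : Matrix (Fin k ⊕ Fin 1) (Fin k ⊕ Fin 1) ℝ) * Qb) *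
        diagonal ν *
        ((fromBlocks
            ((fromBlocks R 0 0 1 : Matrix (Fin ℓ ⊕ Fin s) (Fin k ⊕ Fin s) ℝ) * Rt)
            0 0 1 : Matrix ((Fin ℓ ⊕ Fin s) ⊕ Fin 1) (Fin k ⊕ Fin 1) ℝ) * Rb)ᵀ ∧
    (appendCol Q etil *
        (fromBlocks Qt 0 0 1 : Matrix (Fin k ⊕ Fin 1) (Fin k ⊕ Fin 1) ℝ) * Qb)ᵀ * W *
      (appendCol Q etil *
        (fromBlocks Qt 0 0 1 : Matrix (Fin k ⊕ Fin 1) (Fin k ⊕ Fin 1) ℝ) * Qb) = 1 ∧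
    ((fromBlocks
        ((fromBlocks R 0 0 1 : Matrix (Fin ℓ ⊕ Fin s) (Fin k ⊕ Fin s) ℝ) * Rt)
        0 0 1 : Matrix ((Fin ℓ ⊕ Fin s) ⊕ Fin 1) (Fin k ⊕ Fin 1) ℝ) * Rb)ᵀ *
      ((fromBlocks
        ((fromBlocks R 0 0 1 : Matrix (Fin ℓ ⊕ Fin s) (Fin k ⊕ Fin s) ℝ) * Rt)
        0 0 1 : Matrix ((Fin ℓ ⊕ Fin s) ⊕ Fin 1) (Fin k ⊕ Fin 1) ℝ) * Rb) = 1 := by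
  set Qh := Q * Qt
  have hQh : Qhᵀ * W * Qh = 1 := transpose_mul_mul_mul_eq_one hQ hQt
  have hproj : Qh *ᵥ (Qhᵀ *ᵥ (W *ᵥ u)) = Q *ᵥ (Qᵀ *ᵥ (W *ᵥ u)) := by
    simp only [Qh, mulVec_mulVec, transpose_mul, ← Matrix.mul_assoc]
    rw [Matrix.mul_assoc Q, hQt', Matrix.mul_one]
  have he' : e = u - Qh *ᵥ (Qhᵀ *ᵥ (W *ᵥ u)) := hproj ▸ he
  have hL : appendCol Q etil *
      (fromBlocks Qt 0 0 1 : Matrix (Fin k ⊕ Fin 1) (Fin k ⊕ Fin 1) ℝ) =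
      fromCols Qh (replicateCol (Fin 1) etil) := by
    rw [appendCol_eq_fromCols, fromCols_mul_fromBlocks]
    simp [Qh]
  refine ⟨?_, ?_, ?_⟩
  · have hUC := fromCols_eq_mul_transpose_of_eq_proj hU hC hSVD
    have hu : Qh *ᵥ (Qhᵀ *ᵥ (W *ᵥ u)) + p • etil = u := by
      rw [hetil, smul_smul, mul_inv_cancel₀ hppos.ne', one_smul, he']
      abel
    have hY : fromBlocks (diagonal σt) (replicateCol (Fin 1) (Qhᵀ *ᵥ (W *ᵥ u))) 0
        (of fun _ _ => p) = Qb * diagonal ν * Rbᵀ := hSVDb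
    rw [appendCol_eq_fromCols, appendCols_eq_fromCols,
      fromCols_replicateCol_eq_mul_transpose hUC hu, hL, hY, transpose_mul]
    simp only [Qh, Matrix.mul_assoc]
  · have hetil_orth : Qhᵀ * W * replicateCol (Fin 1) etil = 0 := by
      rw [transpose_mul_mul_replicateCol, hetil, mulVec_smul, mulVec_smul, he',
        transpose_mulVec_mulVec_sub_proj hQh, smul_zero, replicateCol_zero]
    rw [hL]
    exact transpose_mul_mul_mul_eq_one (fromCols_transpose_mul_mul_fromCols_eq_one hW hQh
      hetil_orth (replicateCol_transpose_mul_mul_replicateCol_eq_one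
        (hetil ▸ dotProduct_mulVec_inv_smul_eq_one hp hppos))) hQb
  · exact transpose_mul_mul_self_eq_one (fromBlocks_transpose_mul_self_eq_one
      (transpose_mul_mul_self_eq_one (fromBlocks_transpose_mul_self_eq_one hR (by simp)) hRt)
      (by simp)) hRb

theorem stmt11 {m ℓ k s : ℕ}
    (W : Matrix (Fin m) (Fin m) ℝ) (hW : W.IsSymm)
    (U : Matrix (Fin m) (Fin ℓ) ℝ)
    (Q : Matrix (Fin m) (Fin k) ℝ) (σ : Fin k → ℝ)
    (R : Matrix (Fin ℓ) (Fin k) ℝ)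
    (hU : U = Q * diagonal σ * Rᵀ)
    (hQ : Qᵀ * W * Q = 1) (hR : Rᵀ * R = 1)
    (C : Matrix (Fin m) (Fin s) ℝ) (hC : C = Q * Qᵀ * W * C)
    -- thin SVD  [Σ | Qᵀ W C] = Qt Σt Rtᵀ
    (Qt : Matrix (Fin k) (Fin k) ℝ) (σt : Fin k → ℝ)
    (Rt : Matrix (Fin k ⊕ Fin s) (Fin k) ℝ)
    (hQt : Qtᵀ * Qt = 1) (hQt' : Qt * Qtᵀ = 1)
    (hσt : ∀ i, 0 ≤ σt i) (hRt : Rtᵀ * Rt = 1)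
    (hSVD : appendCols (diagonal σ) (Qᵀ * W * C) = Qt * diagonal σt * Rtᵀ)
    -- the new column u, its residual e, p = ‖e‖_W > 0, ẽ = e/p
    (u e : Fin m → ℝ) (he : e = u - Q *ᵥ (Qᵀ *ᵥ (W *ᵥ u)))
    (p : ℝ) (hp : p = Real.sqrt (e ⬝ᵥ (W *ᵥ e))) (hppos : 0 < p)
    (etil : Fin m → ℝ) (hetil : etil = p⁻¹ • e)
    -- full SVD  Ȳ = [[Σ̂, Q̂ᵀ W u],[0,p]] = Qb Σb Rbᵀ  with  Q̂ = Q Qt, Σ̂ = Σt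
    (Qb Rb : Matrix (Fin k ⊕ Fin 1) (Fin k ⊕ Fin 1) ℝ)
    (ν : Fin k ⊕ Fin 1 → ℝ)
    (hQb : Qbᵀ * Qb = 1) (hQb' : Qb * Qbᵀ = 1)
    (hRb : Rbᵀ * Rb = 1) (hRb' : Rb * Rbᵀ = 1)
    (hν : ∀ i, 0 ≤ ν i)
    (hSVDb : fromBlocks (diagonal σt)
        (Matrix.of fun i (_ : Fin 1) => ((Q * Qt)ᵀ *ᵥ (W *ᵥ u)) i) 0
        (Matrix.of fun (_ : Fin 1) (_ : Fin 1) => p) = Qb * diagonal ν * Rbᵀ) :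
    appendCol (appendCols U C) u =
      (appendCol Q etil *
          (fromBlocks Qt 0 0 1 : Matrix (Fin k ⊕ Fin 1) (Fin k ⊕ Fin 1) ℝ) * Qb) *
        diagonal ν *
        ((fromBlocks
            ((fromBlocks R 0 0 1 : Matrix (Fin ℓ ⊕ Fin s) (Fin k ⊕ Fin s) ℝ) * Rt)
            0 0 1 : Matrix ((Fin ℓ ⊕ Fin s) ⊕ Fin 1) (Fin k ⊕ Fin 1) ℝ) * Rb)ᵀ ∧
    (appendCol Q etil *
        (fromBlocks Qt 0 0 1 : Matrix (Fin k ⊕ Fin 1) (Fin k ⊕ Fin 1) ℝ) * Qb)ᵀ * W *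
      (appendCol Q etil *
        (fromBlocks Qt 0 0 1 : Matrix (Fin k ⊕ Fin 1) (Fin k ⊕ Fin 1) ℝ) * Qb) = 1 ∧
    ((fromBlocks
        ((fromBlocks R 0 0 1 : Matrix (Fin ℓ ⊕ Fin s) (Fin k ⊕ Fin s) ℝ) * Rt)
        0 0 1 : Matrix ((Fin ℓ ⊕ Fin s) ⊕ Fin 1) (Fin k ⊕ Fin 1) ℝ) * Rb)ᵀ *
      ((fromBlocks
        ((fromBlocks R 0 0 1 : Matrix (Fin ℓ ⊕ Fin s) (Fin k ⊕ Fin s) ℝ) * Rt)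
        0 0 1 : Matrix ((Fin ℓ ⊕ Fin s) ⊕ Fin 1) (Fin k ⊕ Fin 1) ℝ) * Rb) = 1 :=
  stmt11_general W hW U Q σ R hU hQ hR C hC Qt σt Rt hQt hQt' hRt hSVD u e he p hp hppos etil hetil
    Qb Rb ν hQb hRb hSVDb
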